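/- Define u : ℝ² → ℝ as follows: for z = (x, y) with r = √(x² + y²), set u(z) = 0 if r ≤ 1/2, and u(z) = (1 − r)(2r − 1)² · ( y·cos(log(2r − 1)) − x·sin(log(2r − 1)) ) / r if r > 1/2 (in polar coordinates z = r·e^{iθ} this is u = (1 − r)(2r − 1)²·sin(θ − log(2r − 1)) for 1/2 < r, and 0 for r ≤ 1/2). Then u is differentiable at every point of the open unit ball B₁(0) ⊆ ℝ², and its derivative (gradient) vanishes at every point of the closed ball of radius 1/2 centered at the origin. -/

import Mathlib

open Metric Set

noncomputable section

abbrev E2 := EuclideanSpace ℝ (Fin 2)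

/-- The spiral example of Alessandrini: in polar coordinates,
`u(r e^{iθ}) = (1 - r)(2r - 1)² sin(θ - log(2r - 1))` for `r > 1/2` and `u = 0` for
`r ≤ 1/2`. -/
def spiral (z : E2) : ℝ :=
  if ‖z‖ ≤ 1 / 2 then 0
  else (1 - ‖z‖) * (2 * ‖z‖ - 1) ^ 2 *
    (z 1 * Real.cos (Real.log (2 * ‖z‖ - 1)) -
      z 0 * Real.sin (Real.log (2 * ‖z‖ - 1))) / ‖z‖

/-! The angular factor is bounded by `‖w‖`, so `|u(w)| ≤ |1 - ‖w‖| (2‖w‖ - 1)²` outside the disc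
of radius `1/2` and `u = 0` inside it. For `‖z‖ ≤ 1/2` we have `2‖w‖ - 1 ≤ 2‖w - z‖`, hence
`u(w) = O(‖w - z‖²)` as `w → z`, which forces the derivative `0` at `z`. Where `‖z‖ > 1/2`, `u`
is locally a composition of maps that are smooth away from the origin. -/

open Filter Topology Asymptotics Real

lemma abs_mul_cos_sub_mul_sin_le_norm (w : E2) (t : ℝ) :
    |w 1 * cos t - w 0 * sin t| ≤ ‖w‖ := by
  rw [EuclideanSpace.norm_eq]
  apply Real.abs_le_sqrt
  simp only [Fin.sum_univ_two, Real.norm_eq_abs, sq_abs]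
  -- Lagrange: `(w₁ c - w₀ s)² + (w₁ s + w₀ c)² = (w₀² + w₁²)(s² + c²)`
  nlinarith [sin_sq_add_cos_sq t, sq_nonneg (w 1 * sin t + w 0 * cos t)]

lemma spiral_of_norm_le {w : E2} (hw : ‖w‖ ≤ 1 / 2) : spiral w = 0 := if_pos hw

lemma abs_spiral_le {w : E2} (hw : 1 / 2 < ‖w‖) :
    |spiral w| ≤ |1 - ‖w‖| * (2 * ‖w‖ - 1) ^ 2 := by
  have hw₀ : 0 < ‖w‖ := by linarith
  rw [spiral, if_neg hw.not_ge, abs_div, abs_of_pos hw₀, div_le_iff₀ hw₀, abs_mul, abs_mul,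
    abs_sq]
  gcongr
  exact abs_mul_cos_sub_mul_sin_le_norm w _

lemma spiral_isBigO {z : E2} (hz : ‖z‖ ≤ 1 / 2) : spiral =O[𝓝 z] fun w ↦ ‖w - z‖ ^ 2 := by
  refine IsBigO.of_bound 4 ?_
  filter_upwards [ball_mem_nhds z one_pos] with w hw
  rw [mem_ball, dist_eq_norm] at hw
  rw [Real.norm_eq_abs, norm_pow, norm_norm]
  rcases le_or_gt ‖w‖ (1 / 2) with hw' | hw'
  · rw [spiral_of_norm_le hw', abs_zero]
    positivity
  have h_one : |1 - ‖w‖| ≤ 1 := by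
    have := norm_le_norm_add_norm_sub' w z
    rw [abs_le]; constructor <;> linarith
  have h_dist : 2 * ‖w‖ - 1 ≤ 2 * ‖w - z‖ := by
    linarith [norm_sub_norm_le w z]
  calc |spiral w| ≤ |1 - ‖w‖| * (2 * ‖w‖ - 1) ^ 2 := abs_spiral_le hw'
    _ ≤ 1 * (2 * ‖w - z‖) ^ 2 := by gcongr; linarith
    _ = 4 * ‖w - z‖ ^ 2 := by ring

lemma spiral_hasFDerivAt_zero {z : E2} (hz : ‖z‖ ≤ 1 / 2) :
    HasFDerivAt spiral (0 : E2 →L[ℝ] ℝ) z :=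
  (spiral_isBigO hz).hasFDerivAt one_lt_two

lemma differentiableAt_spiral {z : E2} (hz : 1 / 2 < ‖z‖) : DifferentiableAt ℝ spiral z := by
  have hnorm_diff : DifferentiableAt ℝ (‖·‖) z :=
    differentiableAt_id.norm ℝ (norm_pos_iff.mp (one_half_pos.trans hz))
  have hlog : 2 * ‖z‖ - 1 ≠ 0 := by linarith
  have hnorm : ‖z‖ ≠ 0 := by linarith
  have hsmooth : DifferentiableAt ℝ (fun w : E2 ↦ (1 - ‖w‖) * (2 * ‖w‖ - 1) ^ 2 *
      (w 1 * cos (Real.log (2 * ‖w‖ - 1)) - w 0 * sin (Real.log (2 * ‖w‖ - 1))) / ‖w‖) z := by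
    fun_prop (disch := assumption)
  refine hsmooth.congr_of_eventuallyEq ?_
  filter_upwards [(isOpen_lt continuous_const continuous_norm).mem_nhds hz] with w hw
  exact if_neg (not_le.mpr hw)

/-- Remark 4.4: the spiral example is differentiable in the open unit ball and its
derivative vanishes on the closed ball of radius `1/2`. -/
theorem spiral_differentiable_gradient_vanishes :
    (∀ z ∈ ball (0 : E2) 1, DifferentiableAt ℝ spiral z) ∧
    (∀ z ∈ closedBall (0 : E2) (1 / 2), fderiv ℝ spiral z = 0) := by
  refine ⟨fun z _ ↦ ?_, fun z hz ↦ ?_⟩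
  · rcases le_or_gt ‖z‖ (1 / 2) with hz | hz
    · exact (spiral_hasFDerivAt_zero hz).differentiableAt
    · exact differentiableAt_spiral hz
  · exact (spiral_hasFDerivAt_zero (mem_closedBall_zero_iff.mp hz)).fderiv
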